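/- arXiv:1604.05228 — 6 statements merged into one kernel-verified Lean document; each statement's English description precedes it below -/
import Mathlib

section
/- (Error representation; the key identity in the proof of Theorem 3.1.) For every u_h ∈ V, p ∈ W, r ∈ H₁ and v ∈ V, one has a(u − u_h, v) = ⟨r + D p, ι v⟩_{H₁} + ⟨J p − G u_h, G v⟩_{H₂} + ⟨F − r − ι u_h, ι v⟩_{H₁}. -/
local notation "⟪" x ", " y "⟫" => @inner ℝ _ _ x y

/-- Error representation identity: for every `u_h ∈ V`, `p ∈ W`, `r ∈ H₁` and `v ∈ V`,
`a(u − u_h, v) = ⟪r + D p, ι v⟫ + ⟪J p − G u_h, G v⟫ + ⟪F − r − ι u_h, ι v⟫`. -/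
theorem error_representation
    {V W H₁ H₂ : Type*}
    [AddCommGroup V] [Module ℝ V] [AddCommGroup W] [Module ℝ W]
    [NormedAddCommGroup H₁] [InnerProductSpace ℝ H₁]
    [NormedAddCommGroup H₂] [InnerProductSpace ℝ H₂]
    (ι : V →ₗ[ℝ] H₁) (G : V →ₗ[ℝ] H₂) (J : W →ₗ[ℝ] H₂) (D : W →ₗ[ℝ] H₁)
    (green : ∀ (p : W) (v : V), ⟪D p, ι v⟫ + ⟪J p, G v⟫ = 0)
    (a : V → V → ℝ)
    (ha : ∀ x y : V, a x y = ⟪G x, G y⟫ + ⟪ι x, ι y⟫)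
    (F : H₁) (u : V)
    (hu : ∀ v : V, a u v = ⟪F, ι v⟫)
    (u_h : V) (p : W) (r : H₁) (v : V) :
    a (u - u_h) v = ⟪r + D p, ι v⟫ + ⟪J p - G u_h, G v⟫ + ⟪F - r - ι u_h, ι v⟫ := by
  have hg := green p v
  have h1 := hu v
  simp only [ha, map_sub, inner_sub_left, inner_add_left] at *
  linarith
end

section
/- (Abstract form of Theorem 3.1 and Corollary 3.1: guaranteed upper bound for the energy error.) For every u_h ∈ V, p ∈ W and r ∈ H₁, ‖u − u_h‖_a ≤ η(r, u_h, p) + ‖F − r − ι u_h‖_{H₁}. In particular, taking the exact residual r = F − ι u_h gives ‖u − u_h‖_a ≤ (‖F − ι u_h + D p‖_{H₁}² + ‖J p − G u_h‖_{H₂}²)^{1/2} for every p ∈ W. -/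
local notation "⟪" x ", " y "⟫" => @inner ℝ _ _ x y

private lemma cs2 (a b c d : ℝ) :
    a * c + b * d ≤ Real.sqrt (a ^ 2 + b ^ 2) * Real.sqrt (c ^ 2 + d ^ 2) := by
  rw [← Real.sqrt_mul (by positivity)]
  have h1 : a * c + b * d ≤ Real.sqrt ((a * c + b * d) ^ 2) := by
    rw [Real.sqrt_sq_eq_abs]; exact le_abs_self _
  refine h1.trans (Real.sqrt_le_sqrt ?_)
  nlinarith [sq_nonneg (a * d - b * c)]

private lemma div_trick {N C : ℝ} (hN : 0 ≤ N) (hC : 0 ≤ C) (h : N ^ 2 ≤ C * N) :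
    N ≤ C := by
  rcases eq_or_lt_of_le hN with h0 | h0
  · linarith
  · nlinarith

/-- Guaranteed upper bound for the energy error: for every `u_h ∈ V`, `p ∈ W` and `r ∈ H₁`,
`‖u − u_h‖_a ≤ η(r, u_h, p) + ‖F − r − ι u_h‖`; in particular, taking `r = F − ι u_h`,
`‖u − u_h‖_a ≤ (‖F − ι u_h + D p‖² + ‖J p − G u_h‖²)^{1/2}`. -/
theorem guaranteed_upper_bound
    {V W H₁ H₂ : Type*}
    [AddCommGroup V] [Module ℝ V] [AddCommGroup W] [Module ℝ W]
    [NormedAddCommGroup H₁] [InnerProductSpace ℝ H₁]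
    [NormedAddCommGroup H₂] [InnerProductSpace ℝ H₂]
    (ι : V →ₗ[ℝ] H₁) (G : V →ₗ[ℝ] H₂) (J : W →ₗ[ℝ] H₂) (D : W →ₗ[ℝ] H₁)
    (green : ∀ (p : W) (v : V), ⟪D p, ι v⟫ + ⟪J p, G v⟫ = 0)
    (a : V → V → ℝ)
    (ha : ∀ x y : V, a x y = ⟪G x, G y⟫ + ⟪ι x, ι y⟫)
    (η : H₁ → V → W → ℝ)
    (hη : ∀ (r : H₁) (u_h : V) (p : W),
      η r u_h p = Real.sqrt (‖r + D p‖ ^ 2 + ‖J p - G u_h‖ ^ 2))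
    (F : H₁) (u : V)
    (hu : ∀ v : V, a u v = ⟪F, ι v⟫)
    (u_h : V) (p : W) (r : H₁) :
    Real.sqrt (a (u - u_h) (u - u_h)) ≤ η r u_h p + ‖F - r - ι u_h‖ ∧
    Real.sqrt (a (u - u_h) (u - u_h)) ≤
      Real.sqrt (‖F - ι u_h + D p‖ ^ 2 + ‖J p - G u_h‖ ^ 2) := by
  set e := u - u_h with he
  have hGe : G e = G u - G u_h := map_sub G u u_h
  have hιe : ι e = ι u - ι u_h := map_sub ι u u_h
  have hae : a e e = ‖G e‖ ^ 2 + ‖ι e‖ ^ 2 := by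
    rw [ha, real_inner_self_eq_norm_sq, real_inner_self_eq_norm_sq]
  have hnn : 0 ≤ a e e := by rw [hae]; positivity
  set N := Real.sqrt (a e e) with hNdef
  have hNnn : 0 ≤ N := Real.sqrt_nonneg _
  have hN2 : N ^ 2 = a e e := Real.sq_sqrt hnn
  have hNeq : N = Real.sqrt (‖ι e‖ ^ 2 + ‖G e‖ ^ 2) := by rw [hNdef, hae, add_comm]
  have hιN : ‖ι e‖ ≤ N := by
    have : ‖ι e‖ = Real.sqrt (‖ι e‖ ^ 2) := (Real.sqrt_sq (norm_nonneg _)).symm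
    rw [this, hNeq]
    exact Real.sqrt_le_sqrt (by nlinarith [sq_nonneg ‖G e‖])
  -- key identity, for arbitrary s
  have key : ∀ s : H₁,
      a e e = ⟪s + D p, ι e⟫ + ⟪J p - G u_h, G e⟫ + ⟪F - s - ι u_h, ι e⟫ := by
    intro s
    have hg := green p e
    have h1 := hu e
    rw [ha] at h1
    rw [hae]
    simp only [hGe, hιe, ← real_inner_self_eq_norm_sq, inner_add_left,
      inner_sub_left, inner_sub_right] at hg h1 ⊢
    linarith [real_inner_comm (G u) (G u_h), real_inner_comm (ι u) (ι u_h)]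
  -- Cauchy–Schwarz style bound for arbitrary s
  have bound : ∀ s : H₁,
      ⟪s + D p, ι e⟫ + ⟪J p - G u_h, G e⟫ ≤
        Real.sqrt (‖s + D p‖ ^ 2 + ‖J p - G u_h‖ ^ 2) * N := by
    intro s
    have c1 := real_inner_le_norm (s + D p) (ι e)
    have c2 := real_inner_le_norm (J p - G u_h) (G e)
    have c3 := cs2 ‖s + D p‖ ‖J p - G u_h‖ ‖ι e‖ ‖G e‖
    rw [← hNeq] at c3
    linarith
  constructor
  · -- first bound
    have hkey := key r
    have hb := bound r
    have hlast : ⟪F - r - ι u_h, ι e⟫ ≤ ‖F - r - ι u_h‖ * N := by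
      have := real_inner_le_norm (F - r - ι u_h) (ι e)
      nlinarith [norm_nonneg (F - r - ι u_h)]
    have hNsq : N ^ 2 ≤ (η r u_h p + ‖F - r - ι u_h‖) * N := by
      rw [hN2, hη]
      nlinarith
    exact div_trick hNnn (by rw [hη]; positivity) hNsq
  · -- second bound with s = F - ι u_h
    have hkey := key (F - ι u_h)
    have hb := bound (F - ι u_h)
    have hz : F - (F - ι u_h) - ι u_h = 0 := by abel
    rw [hz, inner_zero_left, add_zero] at hkey
    have hNsq : N ^ 2 ≤ Real.sqrt (‖F - ι u_h + D p‖ ^ 2 + ‖J p - G u_h‖ ^ 2) * N := by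
      rw [hN2]; linarith
    exact div_trick hNnn (Real.sqrt_nonneg _) hNsq
end

section
/- (Efficiency of the optimal estimator; kernel of Theorem 3.2.) Suppose there exists p̄ ∈ W with J p̄ = G u and D p̄ = ι u − F, and suppose p* ∈ W minimizes p ↦ η(r, u_h, p) over W (for given r ∈ H₁ and u_h ∈ V). Then η(r, u_h, p*)² ≤ ‖r − (F − ι u)‖_{H₁}² + ‖G u − G u_h‖_{H₂}² ≤ ‖r − (F − ι u)‖_{H₁}² + ‖u − u_h‖_a². -/
local notation "⟪" x ", " y "⟫" => @inner ℝ _ _ x y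

/-- Efficiency of the optimal estimator: if there exists an exact flux `p̄` with
`J p̄ = G u`, `D p̄ = ι u − F`, and `p*` minimizes `p ↦ η(r, u_h, p)` over `W`, then
`η(r, u_h, p*)² ≤ ‖r − (F − ι u)‖² + ‖G u − G u_h‖² ≤ ‖r − (F − ι u)‖² + ‖u − u_h‖_a²`. -/
theorem optimal_estimator_efficiency
    {V W H₁ H₂ : Type*}
    [AddCommGroup V] [Module ℝ V] [AddCommGroup W] [Module ℝ W]
    [NormedAddCommGroup H₁] [InnerProductSpace ℝ H₁]
    [NormedAddCommGroup H₂] [InnerProductSpace ℝ H₂]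
    (ι : V →ₗ[ℝ] H₁) (G : V →ₗ[ℝ] H₂) (J : W →ₗ[ℝ] H₂) (D : W →ₗ[ℝ] H₁)
    (green : ∀ (p : W) (v : V), ⟪D p, ι v⟫ + ⟪J p, G v⟫ = 0)
    (a : V → V → ℝ)
    (ha : ∀ x y : V, a x y = ⟪G x, G y⟫ + ⟪ι x, ι y⟫)
    (η : H₁ → V → W → ℝ)
    (hη : ∀ (r : H₁) (u_h : V) (p : W),
      η r u_h p = Real.sqrt (‖r + D p‖ ^ 2 + ‖J p - G u_h‖ ^ 2))
    (F : H₁) (u : V)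
    (hu : ∀ v : V, a u v = ⟪F, ι v⟫)
    (pbar : W)
    (hJ : J pbar = G u) (hD : D pbar = ι u - F)
    (r : H₁) (u_h : V)
    (pstar : W)
    (hmin : ∀ p : W, η r u_h pstar ≤ η r u_h p) :
    η r u_h pstar ^ 2 ≤ ‖r - (F - ι u)‖ ^ 2 + ‖G u - G u_h‖ ^ 2 ∧
    ‖r - (F - ι u)‖ ^ 2 + ‖G u - G u_h‖ ^ 2 ≤
      ‖r - (F - ι u)‖ ^ 2 + a (u - u_h) (u - u_h) := by
  constructor
  · have h1 : η r u_h pstar ≤ η r u_h pbar := hmin pbar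
    have hnn : 0 ≤ ‖r + D pbar‖ ^ 2 + ‖J pbar - G u_h‖ ^ 2 := by positivity
    have h2 : η r u_h pbar ^ 2 = ‖r + D pbar‖ ^ 2 + ‖J pbar - G u_h‖ ^ 2 := by
      rw [hη, Real.sq_sqrt hnn]
    have h0 : 0 ≤ η r u_h pbar := by rw [hη]; exact Real.sqrt_nonneg _
    calc η r u_h pstar ^ 2 ≤ η r u_h pbar ^ 2 := by
          have h0' : 0 ≤ η r u_h pstar := by rw [hη]; exact Real.sqrt_nonneg _
          exact pow_le_pow_left₀ h0' h1 2
      _ = ‖r + D pbar‖ ^ 2 + ‖J pbar - G u_h‖ ^ 2 := h2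
      _ = ‖r - (F - ι u)‖ ^ 2 + ‖G u - G u_h‖ ^ 2 := by
          rw [hJ, hD]
          congr 2
          abel
  · have : ‖G u - G u_h‖ ^ 2 ≤ a (u - u_h) (u - u_h) := by
      rw [ha, map_sub, map_sub, real_inner_self_eq_norm_sq, real_inner_self_eq_norm_sq]
      nlinarith [sq_nonneg ‖ι u - ι u_h‖]
    linarith
end

section
/- (Corollary 3.2, abstract form: efficiency of the computable estimator.) Assume a*(p,q) := ⟨D p, D q⟩_{H₁} + ⟨J p, J q⟩_{H₂} is positive definite on W with norm |||p|||_* := a*(p,p)^{1/2}. Suppose p* ∈ W satisfies a*(p*, q) = −⟨r, D q⟩_{H₁} + ⟨G u_h, J q⟩_{H₂} for all q ∈ W (the dual problem with data g = r, f = G u_h), suppose there exists p̄ ∈ W with J p̄ = G u and D p̄ = ι u − F, and suppose p_h ∈ W and constants c, Ĉ ≥ 0 satisfy ‖r − (F − ι u)‖_{H₁} ≤ c ‖u − u_h‖_a and |||p* − p_h|||_* ≤ Ĉ ‖u − u_h‖_a. Then η(r, u_h, p_h) ≤ (1 + c² + Ĉ²)^{1/2} ‖u − u_h‖_a. -/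
local notation "⟪" x ", " y "⟫" => @inner ℝ _ _ x y

/-- Efficiency of the computable estimator: if `p*` solves the dual problem with data
`g = r`, `f = G u_h`, there exists an exact flux `p̄`, and `p_h ∈ W`, `c, Ĉ ≥ 0` satisfy
`‖r − (F − ι u)‖ ≤ c ‖u − u_h‖_a` and `|||p* − p_h|||_* ≤ Ĉ ‖u − u_h‖_a`, then
`η(r, u_h, p_h) ≤ (1 + c² + Ĉ²)^{1/2} ‖u − u_h‖_a`. -/
theorem computable_estimator_efficiency
    {V W H₁ H₂ : Type*}
    [AddCommGroup V] [Module ℝ V] [AddCommGroup W] [Module ℝ W]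
    [NormedAddCommGroup H₁] [InnerProductSpace ℝ H₁]
    [NormedAddCommGroup H₂] [InnerProductSpace ℝ H₂]
    (ι : V →ₗ[ℝ] H₁) (G : V →ₗ[ℝ] H₂) (J : W →ₗ[ℝ] H₂) (D : W →ₗ[ℝ] H₁)
    (green : ∀ (p : W) (v : V), ⟪D p, ι v⟫ + ⟪J p, G v⟫ = 0)
    (a : V → V → ℝ)
    (ha : ∀ x y : V, a x y = ⟪G x, G y⟫ + ⟪ι x, ι y⟫)
    (astar : W → W → ℝ)
    (hastar : ∀ p q : W, astar p q = ⟪D p, D q⟫ + ⟪J p, J q⟫)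
    (posdef : ∀ p : W, astar p p = 0 → p = 0)
    (η : H₁ → V → W → ℝ)
    (hη : ∀ (r : H₁) (u_h : V) (p : W),
      η r u_h p = Real.sqrt (‖r + D p‖ ^ 2 + ‖J p - G u_h‖ ^ 2))
    (F : H₁) (u : V)
    (hu : ∀ v : V, a u v = ⟪F, ι v⟫)
    (r : H₁) (u_h : V)
    (pstar : W)
    (hpstar : ∀ q : W, astar pstar q = -⟪r, D q⟫ + ⟪G u_h, J q⟫)
    (pbar : W)
    (hJ : J pbar = G u) (hD : D pbar = ι u - F)
    (p_h : W) (c Chat : ℝ) (hc : 0 ≤ c) (hChat : 0 ≤ Chat)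
    (hres : ‖r - (F - ι u)‖ ≤ c * Real.sqrt (a (u - u_h) (u - u_h)))
    (hdual : Real.sqrt (astar (pstar - p_h) (pstar - p_h)) ≤
      Chat * Real.sqrt (a (u - u_h) (u - u_h))) :
    η r u_h p_h ≤
      Real.sqrt (1 + c ^ 2 + Chat ^ 2) * Real.sqrt (a (u - u_h) (u - u_h)) := by

  set A := a (u - u_h) (u - u_h) with hAdef
  have hA : A = ‖G (u - u_h)‖ ^ 2 + ‖ι (u - u_h)‖ ^ 2 := by
    rw [hAdef, ha, real_inner_self_eq_norm_sq, real_inner_self_eq_norm_sq]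
  have hA0 : 0 ≤ A := by rw [hA]; positivity
  have hMsq : Real.sqrt A ^ 2 = A := Real.sq_sqrt hA0
  -- Pythagoras identity
  have key : ∀ p : W, ‖r + D p‖ ^ 2 + ‖J p - G u_h‖ ^ 2 =
      (‖r + D pstar‖ ^ 2 + ‖J pstar - G u_h‖ ^ 2) +
      (‖D (p - pstar)‖ ^ 2 + ‖J (p - pstar)‖ ^ 2) := by
    intro p
    have hq := hpstar (p - pstar)
    rw [hastar] at hq
    have h1 : r + D p = (r + D pstar) + D (p - pstar) := by rw [map_sub]; abel
    have h2 : J p - G u_h = (J pstar - G u_h) + J (p - pstar) := by rw [map_sub]; abel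
    rw [h1, h2, norm_add_sq_real (r + D pstar) (D (p - pstar)), norm_add_sq_real (J pstar - G u_h) (J (p - pstar))]
    have hc1 : ⟪r + D pstar, D (p - pstar)⟫ = ⟪r, D (p - pstar)⟫ + ⟪D pstar, D (p - pstar)⟫ :=
      inner_add_left _ _ _
    have hc2 : ⟪J pstar - G u_h, J (p - pstar)⟫ =
        ⟪J pstar, J (p - pstar)⟫ - ⟪G u_h, J (p - pstar)⟫ := inner_sub_left _ _ _
    linarith [hq, hc1, hc2]
  -- residual bound
  have hres2 : ‖r - (F - ι u)‖ ^ 2 ≤ c ^ 2 * A := by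
    have := mul_self_le_mul_self (norm_nonneg _) hres
    calc ‖r - (F - ι u)‖ ^ 2 = ‖r - (F - ι u)‖ * ‖r - (F - ι u)‖ := sq (M := ℝ) _
      _ ≤ (c * Real.sqrt A) * (c * Real.sqrt A) := this
      _ = c ^ 2 * (Real.sqrt A ^ 2) := by ring
      _ = c ^ 2 * A := by rw [hMsq]
  -- dual bound
  have hQnn : 0 ≤ astar (pstar - p_h) (pstar - p_h) := by
    rw [hastar, real_inner_self_eq_norm_sq, real_inner_self_eq_norm_sq]; positivity
  have hdual2 : astar (pstar - p_h) (pstar - p_h) ≤ Chat ^ 2 * A := by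
    have h := mul_self_le_mul_self (Real.sqrt_nonneg _) hdual
    rw [Real.mul_self_sqrt hQnn] at h
    calc astar (pstar - p_h) (pstar - p_h) ≤ (Chat * Real.sqrt A) * (Chat * Real.sqrt A) := h
      _ = Chat ^ 2 * (Real.sqrt A ^ 2) := by ring
      _ = Chat ^ 2 * A := by rw [hMsq]
  have hQeq : ‖D (p_h - pstar)‖ ^ 2 + ‖J (p_h - pstar)‖ ^ 2 =
      astar (pstar - p_h) (pstar - p_h) := by
    rw [hastar, real_inner_self_eq_norm_sq, real_inner_self_eq_norm_sq, map_sub, map_sub,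
      map_sub, map_sub, norm_sub_rev (D p_h), norm_sub_rev (J p_h)]
  -- η(p*)² ≤ η(p̄)²
  have hbar : ‖r + D pstar‖ ^ 2 + ‖J pstar - G u_h‖ ^ 2 ≤
      ‖r - (F - ι u)‖ ^ 2 + ‖G (u - u_h)‖ ^ 2 := by
    have h := key pbar
    have e1 : r + D pbar = r - (F - ι u) := by rw [hD]; abel
    have e2 : J pbar - G u_h = G (u - u_h) := by rw [hJ, map_sub]
    rw [e1, e2] at h
    linarith [h, sq_nonneg ‖D (pbar - pstar)‖, sq_nonneg ‖J (pbar - pstar)‖]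
  -- combine
  have hS : ‖r + D p_h‖ ^ 2 + ‖J p_h - G u_h‖ ^ 2 ≤ (1 + c ^ 2 + Chat ^ 2) * A := by
    have h := key p_h
    have hg : ‖G (u - u_h)‖ ^ 2 ≤ A := by rw [hA]; linarith [sq_nonneg ‖ι (u - u_h)‖]
    linarith [h, hres2, hdual2, hQeq, hbar, hg]
  rw [hη]
  calc Real.sqrt (‖r + D p_h‖ ^ 2 + ‖J p_h - G u_h‖ ^ 2)
      ≤ Real.sqrt ((1 + c ^ 2 + Chat ^ 2) * A) := Real.sqrt_le_sqrt hS
    _ = Real.sqrt (1 + c ^ 2 + Chat ^ 2) * Real.sqrt A := by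
        rw [Real.sqrt_mul (by positivity)]
end

section
/- (Lemma 4.1, Rayleigh quotient expansion of the eigenvalue error; stated with the corrected sign of the nonlinear term.) If b(u_h, u_h) ≠ 0, then, with e := u_h − u, λ_h − λ = [a(e,e) − λ b(e,e) + w(e,e) + N(u,u) − 2 N(u,u_h) + N(u_h,u_h)] / b(u_h,u_h). -/
/-- Rayleigh quotient expansion of the eigenvalue error: if `b(u_h,u_h) ≠ 0` then, with
`e := u_h − u`,
`λ_h − λ = [a(e,e) − λ b(e,e) + w(e,e) + N(u,u) − 2N(u,u_h) + N(u_h,u_h)] / b(u_h,u_h)`. -/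
theorem rayleigh_quotient_expansion
    {V : Type*} [AddCommGroup V] [Module ℝ V]
    (a b w : V →ₗ[ℝ] V →ₗ[ℝ] ℝ)
    (ha : ∀ x y : V, a x y = a y x)
    (hb : ∀ x y : V, b x y = b y x)
    (hw : ∀ x y : V, w x y = w y x)
    (N : V → V →ₗ[ℝ] ℝ)
    (lam lamh : ℝ) (u u_h : V)
    (heig : ∀ v : V, a u v + w u v + N u v = lam * b u v)
    (heigh : lamh * b u_h u_h = a u_h u_h + w u_h u_h + N u_h u_h)
    (hne : b u_h u_h ≠ 0) :
    lamh - lam =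
      (a (u_h - u) (u_h - u) - lam * b (u_h - u) (u_h - u) + w (u_h - u) (u_h - u)
        + N u u - 2 * N u u_h + N u_h u_h) / b u_h u_h := by
  rw [eq_div_iff hne, sub_mul]
  simp only [map_sub, LinearMap.sub_apply]
  linear_combination heigh + 2 * heig u_h - heig u + ha u_h u + hw u_h u - lam * hb u_h u
end

section
/- (Energy error expansion; kernel of Corollary 4.1.) If b(u_h,u_h) = 1 and we set E := λ − (1/2) N(u,u) and E_h := λ_h − (1/2) N(u_h,u_h), then, with e := u_h − u, E_h − E = a(e,e) − λ b(e,e) + w(e,e) + (3/2) N(u,u) − 2 N(u,u_h) + (1/2) N(u_h,u_h). -/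
/-- Energy error expansion: if `b(u_h,u_h) = 1`, `E := λ − (1/2)N(u,u)` and
`E_h := λ_h − (1/2)N(u_h,u_h)`, then, with `e := u_h − u`,
`E_h − E = a(e,e) − λ b(e,e) + w(e,e) + (3/2)N(u,u) − 2N(u,u_h) + (1/2)N(u_h,u_h)`. -/
theorem energy_error_expansion
    {V : Type*} [AddCommGroup V] [Module ℝ V]
    (a b w : V →ₗ[ℝ] V →ₗ[ℝ] ℝ)
    (ha : ∀ x y : V, a x y = a y x)
    (hb : ∀ x y : V, b x y = b y x)
    (hw : ∀ x y : V, w x y = w y x)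
    (N : V → V →ₗ[ℝ] ℝ)
    (lam lamh : ℝ) (u u_h : V)
    (heig : ∀ v : V, a u v + w u v + N u v = lam * b u v)
    (heigh : lamh * b u_h u_h = a u_h u_h + w u_h u_h + N u_h u_h)
    (hnorm : b u_h u_h = 1)
    (E Eh : ℝ)
    (hE : E = lam - (1 / 2) * N u u)
    (hEh : Eh = lamh - (1 / 2) * N u_h u_h) :
    Eh - E =
      a (u_h - u) (u_h - u) - lam * b (u_h - u) (u_h - u) + w (u_h - u) (u_h - u)
        + (3 / 2) * N u u - 2 * N u u_h + (1 / 2) * N u_h u_h := by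
  subst hE hEh
  rw [hnorm, mul_one] at heigh
  have h1 := heig u_h
  have h2 := heig u
  simp only [map_sub, LinearMap.sub_apply]
  rw [ha u u_h, hb u u_h, hw u u_h] at *
  have h3 : lam * b u_h u_h = lam * 1 := by rw [hnorm]
  ring_nf at h3 ⊢
  linarith
end
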